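/- The sum over all rooted binary trees T with r vertices of the product over vertices v of 1/h_T(v) equals 1, where h_T(v) is the size of the subtree rooted at v. -/

import Mathlib

/-- Rooted binary trees: each vertex has an ordered pair of (possibly empty)
subtrees. `leaf` denotes the empty tree, so vertices are the `node`s. -/
inductive BinTree : Type
  | leaf : BinTree
  | node (l r : BinTree) : BinTree
deriving DecidableEq

/-- The number of vertices of a binary tree. -/
def BinTree.size : BinTree → ℕ
  | .leaf => 0
  | .node l r => l.size + r.size + 1

/-- The product `∏_v h_T(v)` of the hook (subtree) sizes over all vertices `v`. -/
def BinTree.hookProd : BinTree → ℕ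
  | .leaf => 1
  | .node l r => (l.size + r.size + 1) * l.hookProd * r.hookProd

/-!
Deleting the root of a tree with `n + 1` vertices leaves an ordered pair of trees with
`i` and `j` vertices, `i + j = n`, and the weight `∏_v 1/h_T(v)` of the tree is `1/(n + 1)`
times the product of the weights of the two subtrees. So if every size below `n + 1` has
total weight `1`, each of the `n + 1` pairs `(i, j)` contributes `1/(n + 1)`.
-/

namespace BinTree

open Finset HasAntidiagonal

def ofSize : ℕ → Finset BinTree
  | 0 => {leaf}
  | n + 1 => (antidiagonal n).attach.biUnion fun p =>
      (ofSize p.1.1 ×ˢ ofSize p.1.2).image fun q => node q.1 q.2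
  decreasing_by
  · exact Nat.lt_succ_of_le (antidiagonal.fst_le p.2)
  · exact Nat.lt_succ_of_le (antidiagonal.snd_le p.2)

theorem mem_ofSize {T : BinTree} {n : ℕ} : T ∈ ofSize n ↔ T.size = n := by
  induction T generalizing n with
  | leaf => cases n <;> simp [ofSize, size]
  | node l r ihl ihr =>
    cases n with
    | zero => simp [ofSize, size]
    | succ n =>
      simp only [ofSize, mem_biUnion, mem_attach, mem_image, mem_product, true_and,
        Subtype.exists, HasAntidiagonal.mem_antidiagonal, Prod.exists, node.injEq, size]
      constructor
      · rintro ⟨i, j, hij, l', r', ⟨hl', hr'⟩, rfl, rfl⟩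
        rw [ihl.mp hl', ihr.mp hr']
        omega
      · intro h
        exact ⟨l.size, r.size, by omega, l, r, ⟨ihl.mpr rfl, ihr.mpr rfl⟩, rfl, rfl⟩

theorem sum_ofSize_succ {β : Type*} [AddCommMonoid β] (f : BinTree → β) (n : ℕ) :
    ∑ T ∈ ofSize (n + 1), f T =
      ∑ p ∈ antidiagonal n, ∑ l ∈ ofSize p.1, ∑ r ∈ ofSize p.2, f (node l r) := by
  rw [ofSize, sum_biUnion]
  · rw [← sum_attach (antidiagonal n)]
    refine sum_congr rfl fun p _ => ?_
    rw [sum_image fun _ _ _ _ h => by simpa [Prod.ext_iff] using h, sum_product]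
  · intro p _ q _ hpq
    simp only [Function.onFun, disjoint_left, mem_image, mem_product, mem_ofSize]
    rintro _ ⟨⟨l, r⟩, ⟨hl, -⟩, rfl⟩ ⟨⟨l', r'⟩, ⟨hl', -⟩, h⟩
    obtain ⟨rfl, -⟩ := node.inj h
    exact hpq (antidiagonal_subtype_ext (hl.symm.trans hl'))

theorem inv_hookProd_node (l r : BinTree) :
    ((node l r).hookProd : ℚ)⁻¹ =
      ((node l r).size : ℚ)⁻¹ * (l.hookProd : ℚ)⁻¹ * (r.hookProd : ℚ)⁻¹ := by
  simp only [hookProd, size, Nat.cast_mul, mul_inv]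

theorem sum_ofSize_inv_hookProd (n : ℕ) : ∑ T ∈ ofSize n, (T.hookProd : ℚ)⁻¹ = 1 := by
  induction n using Nat.strong_induction_on with
  | _ n ih =>
  cases n with
  | zero => simp [ofSize, hookProd]
  | succ n =>
    have hsum (p) (hp : p ∈ antidiagonal n) :
        ∑ l ∈ ofSize p.1, ∑ r ∈ ofSize p.2, ((node l r).hookProd : ℚ)⁻¹ = (n + 1 : ℚ)⁻¹ := by
      have hsize : ∀ l ∈ ofSize p.1, ∀ r ∈ ofSize p.2, (node l r).size = n + 1 := by
        intro l hl r hr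
        rw [size, mem_ofSize.mp hl, mem_ofSize.mp hr, HasAntidiagonal.mem_antidiagonal.mp hp]
      calc ∑ l ∈ ofSize p.1, ∑ r ∈ ofSize p.2, ((node l r).hookProd : ℚ)⁻¹
          = (n + 1 : ℚ)⁻¹ * ((∑ l ∈ ofSize p.1, (l.hookProd : ℚ)⁻¹) *
              ∑ r ∈ ofSize p.2, (r.hookProd : ℚ)⁻¹) := by
            rw [sum_mul_sum, mul_sum]
            refine sum_congr rfl fun l hl => ?_
            rw [mul_sum]
            refine sum_congr rfl fun r hr => ?_
            rw [inv_hookProd_node, hsize l hl r hr, mul_assoc, Nat.cast_succ]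
        _ = (n + 1 : ℚ)⁻¹ := by
            rw [ih _ (Nat.lt_succ_of_le (antidiagonal.fst_le hp)),
              ih _ (Nat.lt_succ_of_le (antidiagonal.snd_le hp)), mul_one, mul_one]
    rw [sum_ofSize_succ, sum_congr rfl hsum, sum_const, Nat.card_antidiagonal, nsmul_eq_mul]
    push_cast
    exact mul_inv_cancel₀ (by positivity)

end BinTree

theorem binary_tree_hook_sum_general (r : ℕ) (S : Finset BinTree)
    (hS : ∀ T : BinTree, T ∈ S ↔ T.size = r) :
    ∑ T ∈ S, (1 : ℚ) / T.hookProd = 1 := by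
  have hS : S = BinTree.ofSize r := Finset.ext fun T => (hS T).trans BinTree.mem_ofSize.symm
  simpa [hS] using BinTree.sum_ofSize_inv_hookProd r

/-- **Hook summation formula for binary trees.** The sum over all rooted binary
trees `T` with `r` vertices of `∏_{v ∈ T} 1/h_T(v)` equals `1`, where `h_T(v)`
is the size of the subtree rooted at `v`.  (Here `S` is the finite set of all
binary trees with `r` vertices.) -/
theorem binary_tree_hook_sum (r : ℕ) (hr : 1 ≤ r) (S : Finset BinTree)
    (hS : ∀ T : BinTree, T ∈ S ↔ T.size = r) :
    ∑ T ∈ S, (1 : ℚ) / T.hookProd = 1 :=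
  binary_tree_hook_sum_general r S hS
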